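/- arXiv:1701.08420 — 4 statements merged into one kernel-verified Lean document; each statement's English description precedes it below -/
import Mathlib

section
/- Let N be a finite set and let D(N) denote the set of unordered pairs of distinct elements of N. Suppose G is a simple (undirected) graph with vertex set D(N) whose adjacency relation is invariant under the natural action of every permutation π of N (i.e., for all dyads {i,j},{k,l} in D(N), {i,j} and {k,l} are adjacent in G if and only if {π(i),π(j)} and {π(k),π(l)} are adjacent in G). Then G is one of exactly four graphs: (a) the empty graph on D(N); (b) the incidence graph L(N), in which two distinct dyads are adjacent if and only if they share a common element of N; (c) the complement of the incidence graph, in which two distinct dyads are adjacent if and only if they are disjoint; or (d) the complete graph on D(N). -/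
/-!
Every ordered pair of distinct dyads is carried by a permutation of `N` to any other pair of the
same kind: intersecting pairs are parametrised by three distinct nodes and disjoint pairs by four,
and a bijection between finite sets of nodes extends to a permutation of `N`. So `L(N)` and its
complement are the two orbits on ordered pairs of distinct dyads, and an invariant graph contains
either none or all of the edges of each of them.
-/

/-- The type of dyads over a node set `V`: unordered pairs of distinct nodes. -/
abbrev Dyad (V : Type*) : Type _ := {d : Sym2 V // ¬ d.IsDiag}

/-- The action of a permutation of the node set on dyads. -/
def dyadPerm {V : Type*} (π : Equiv.Perm V) (d : Dyad V) : Dyad V :=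
  ⟨d.1.map π, by
    rw [Sym2.isDiag_map (Equiv.injective π)]
    exact d.2⟩

/-- The incidence graph `L(N)`: vertices are the dyads of `N`, and two distinct
dyads are adjacent iff they share a common node. -/
def incidenceGraph (V : Type*) : SimpleGraph (Dyad V) where
  Adj d e := d ≠ e ∧ ∃ i, i ∈ d.1 ∧ i ∈ e.1
  symm := by
    constructor
    rintro d e ⟨hne, i, h1, h2⟩
    exact ⟨hne.symm, i, h2, h1⟩
  loopless := by
    constructor
    rintro d ⟨hne, _⟩
    exact hne rfl

namespace Dyad

variable {V : Type*}

lemma ne_of_val_eq {d : Dyad V} {a b : V} (h : d.1 = s(a, b)) : a ≠ b := by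
  rintro rfl
  exact d.2 (h ▸ Sym2.mk_isDiag_iff.mpr rfl)

lemma exists_dyadPerm_eq_of_injective {ι : Type*} [Finite ι] {f g : ι → V}
    (hf : f.Injective) (hg : g.Injective) {d e d' e' : Dyad V} {x y z w : ι}
    (hd : d.1 = s(f x, f y)) (he : e.1 = s(f z, f w))
    (hd' : d'.1 = s(g x, g y)) (he' : e'.1 = s(g z, g w)) :
    ∃ π : Equiv.Perm V, dyadPerm π d = d' ∧ dyadPerm π e = e' := by
  obtain ⟨π, hπ⟩ := Equiv.Perm.exists_extending_pair f g hf hg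
  refine ⟨π, Subtype.ext ?_, Subtype.ext ?_⟩ <;> simp [dyadPerm, hd, he, hd', he', hπ]

lemma exists_injective_of_incidenceGraph_adj {d e : Dyad V} (h : (incidenceGraph V).Adj d e) :
    ∃ f : Fin 3 → V, f.Injective ∧ d.1 = s(f 0, f 1) ∧ e.1 = s(f 0, f 2) := by
  obtain ⟨hne, i, hid, hie⟩ := h
  obtain ⟨b, hb⟩ := Sym2.mem_iff_exists.mp hid
  obtain ⟨c, hc⟩ := Sym2.mem_iff_exists.mp hie
  have hib := ne_of_val_eq hb
  have hic := ne_of_val_eq hc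
  have hbc : b ≠ c := by
    rintro rfl
    exact hne (Subtype.ext (hb.trans hc.symm))
  refine ⟨![i, b, c], ?_, hb, hc⟩
  intro x y
  fin_cases x <;> fin_cases y <;> simp_all [eq_comm]

lemma exists_injective_of_compl_incidenceGraph_adj {d e : Dyad V}
    (h : (incidenceGraph V)ᶜ.Adj d e) :
    ∃ f : Fin 4 → V, f.Injective ∧ d.1 = s(f 0, f 1) ∧ e.1 = s(f 2, f 3) := by
  obtain ⟨hne, hmeet⟩ := h
  have hdisj : ∀ i, i ∈ d.1 → i ∉ e.1 := fun i hid hie => hmeet ⟨hne, i, hid, hie⟩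
  obtain ⟨⟨a, b⟩, hab⟩ := Quot.exists_rep d.1
  obtain ⟨⟨c, c'⟩, hcc⟩ := Quot.exists_rep e.1
  replace hab : d.1 = s(a, b) := hab.symm
  replace hcc : e.1 = s(c, c') := hcc.symm
  have hab' := ne_of_val_eq hab
  have hcc' := ne_of_val_eq hcc
  simp only [hab, hcc, Sym2.mem_iff, forall_eq_or_imp, forall_eq, not_or] at hdisj
  obtain ⟨⟨hac, hac'⟩, hbc, hbc'⟩ := hdisj
  refine ⟨![a, b, c, c'], ?_, hab, hcc⟩
  intro x y
  fin_cases x <;> fin_cases y <;> simp_all [eq_comm]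

def IsArcTransitive (H : SimpleGraph (Dyad V)) : Prop :=
  ∀ ⦃d e d' e' : Dyad V⦄, H.Adj d e → H.Adj d' e' →
    ∃ π : Equiv.Perm V, dyadPerm π d = d' ∧ dyadPerm π e = e'

lemma isArcTransitive_incidenceGraph : IsArcTransitive (incidenceGraph V) := by
  intro d e d' e' h h'
  obtain ⟨f, hf, hd, he⟩ := exists_injective_of_incidenceGraph_adj h
  obtain ⟨g, hg, hd', he'⟩ := exists_injective_of_incidenceGraph_adj h'
  exact exists_dyadPerm_eq_of_injective hf hg hd he hd' he'

lemma isArcTransitive_compl_incidenceGraph : IsArcTransitive (incidenceGraph V)ᶜ := by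
  intro d e d' e' h h'
  obtain ⟨f, hf, hd, he⟩ := exists_injective_of_compl_incidenceGraph_adj h
  obtain ⟨g, hg, hd', he'⟩ := exists_injective_of_compl_incidenceGraph_adj h'
  exact exists_dyadPerm_eq_of_injective hf hg hd he hd' he'

lemma inf_eq_bot_or_eq_of_isArcTransitive {G H : SimpleGraph (Dyad V)}
    (hG : ∀ (π : Equiv.Perm V) (d e : Dyad V), G.Adj d e → G.Adj (dyadPerm π d) (dyadPerm π e))
    (hH : IsArcTransitive H) : G ⊓ H = ⊥ ∨ G ⊓ H = H := by
  by_cases hGH : ∃ d e, G.Adj d e ∧ H.Adj d e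
  · obtain ⟨d, e, hGde, hHde⟩ := hGH
    refine Or.inr (le_antisymm inf_le_right fun d' e' hHde' => ⟨?_, hHde'⟩)
    obtain ⟨π, rfl, rfl⟩ := hH hHde hHde'
    exact hG π d e hGde
  · push Not at hGH
    refine Or.inl (SimpleGraph.ext (funext₂ fun d e => ?_))
    simpa using hGH d e

end Dyad

theorem stmt0_general {V : Type*} (G : SimpleGraph (Dyad V))
    (hinv : ∀ (π : Equiv.Perm V) (d e : Dyad V),
      G.Adj d e ↔ G.Adj (dyadPerm π d) (dyadPerm π e)) :
    G = ⊥ ∨ G = incidenceGraph V ∨ G = (incidenceGraph V)ᶜ ∨ G = ⊤ := by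
  have hG := fun π d e => (hinv π d e).mp
  have hsplit : G ⊓ incidenceGraph V ⊔ G ⊓ (incidenceGraph V)ᶜ = G := sup_inf_inf_compl
  rcases Dyad.inf_eq_bot_or_eq_of_isArcTransitive hG
    Dyad.isArcTransitive_incidenceGraph with h | h <;>
  rcases Dyad.inf_eq_bot_or_eq_of_isArcTransitive hG
    Dyad.isArcTransitive_compl_incidenceGraph with h' | h' <;>
  rw [h, h'] at hsplit <;> simp [← hsplit]

/-- If a simple graph `G` on the dyads of a finite node set `N` is
invariant under the natural action of every permutation of `N`, then `G` is the
empty graph, the incidence graph `L(N)`, its complement, or the complete graph. -/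
theorem stmt0 {V : Type*} [Fintype V] [DecidableEq V] (G : SimpleGraph (Dyad V))
    (hinv : ∀ (π : Equiv.Perm V) (d e : Dyad V),
      G.Adj d e ↔ G.Adj (dyadPerm π d) (dyadPerm π e)) :
    G = ⊥ ∨ G = incidenceGraph V ∨ G = (incidenceGraph V)ᶜ ∨ G = ⊤ :=
  stmt0_general G hinv
end

section
/- Let N be a finite set with |N| = n ≥ 2. For any two simple graphs x and y on the vertex set N with identical degree distributions (n_j(x) = n_j(y) for all j ≥ 0), the number of subgraphs of x isomorphic to the complete graph K_{n−1} on n−1 vertices equals the number of subgraphs of y isomorphic to K_{n−1}. That is, σ_{K_{n−1}}(x) is a function of the degree distribution of x alone. -/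
/-- The number of (not necessarily induced) subgraphs of `x` isomorphic to `U`. -/
noncomputable def subCount {W V : Type*} (U : SimpleGraph W) (x : SimpleGraph V) : ℕ :=
  Nat.card {H : x.Subgraph // Nonempty (H.coe ≃g U)}

/-- The `k`-star: the vertex `0` (the hub) is adjacent to the `k` other vertices,
and there are no other edges. -/
def starGraph (k : ℕ) : SimpleGraph (Fin (k + 1)) where
  Adj a b := a ≠ b ∧ (a = 0 ∨ b = 0)
  symm := by
    constructor
    rintro a b ⟨hne, h⟩
    exact ⟨hne.symm, h.symm⟩
  loopless := by
    constructor
    rintro a ⟨hne, _⟩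
    exact hne rfl

/-- The disjoint union of two edges: four vertices and two edges sharing no endpoint. -/
def twoEdges : SimpleGraph (Fin 4) :=
  SimpleGraph.fromRel (fun a b => (a = 0 ∧ b = 1) ∨ (a = 2 ∧ b = 3))

/-- The complete graph on `m` vertices with one edge (between `0` and `1`) removed. -/
def compMinusEdge (m : ℕ) : SimpleGraph (Fin m) :=
  (⊤ : SimpleGraph (Fin m)) \ SimpleGraph.fromRel (fun a b => a.val = 0 ∧ b.val = 1)

/-- The degree of the vertex `v` in the graph `x`. -/
noncomputable def deg {V : Type*} (x : SimpleGraph V) (v : V) : ℕ :=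
  Nat.card {w : V // x.Adj v w}

/-- `nDeg x j` is the number of vertices of `x` having degree `j`
(the degree distribution of `x`). -/
noncomputable def nDeg {V : Type*} (x : SimpleGraph V) (j : ℕ) : ℕ :=
  Nat.card {v : V // deg x v = j}

/-!
A copy of `K_{n-1}` in a graph `x` on `n` vertices is the complete graph on `{v}ᶜ` for a single
vertex `v`, and `{v}ᶜ` is a clique exactly when `v` lies on every non-edge of `x`, i.e. when
`deg_{xᶜ} v = |E(xᶜ)|`. Both sides are determined by degrees: `deg_{xᶜ} v = n - 1 - deg_x v`, and
`|E(xᶜ)|` by the handshake lemma. Equal degree distributions give a degree-preserving bijection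
between the vertices of `x` and `y`, which therefore matches these vertices.
-/

open Finset

namespace SimpleGraph

variable {V W : Type*}

lemma nonempty_iso_top_iff {G : SimpleGraph V} :
    Nonempty (G ≃g (⊤ : SimpleGraph W)) ↔ G = ⊤ ∧ Nonempty (V ≃ W) := by
  constructor
  · rintro ⟨e⟩
    exact ⟨eq_top_of_isIndContained_top e.isIndContained, ⟨e.toEquiv⟩⟩
  · rintro ⟨rfl, ⟨e⟩⟩
    exact ⟨Iso.completeGraph e⟩

namespace Subgraph

variable {G : SimpleGraph V} {H : G.Subgraph}

lemma coe_eq_top_iff : H.coe = ⊤ ↔ ∀ a ∈ H.verts, ∀ b ∈ H.verts, a ≠ b → H.Adj a b := by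
  simp only [SimpleGraph.ext_iff, funext_iff, eq_iff_iff, Subtype.forall, coe_adj,
    SimpleGraph.top_adj, ne_eq, Subtype.mk.injEq]
  exact ⟨fun h a ha b hb => (h a ha b hb).mpr, fun h a ha b hb => ⟨Adj.ne, h a ha b hb⟩⟩

lemma eq_induce_top_of_coe_eq_top (h : H.coe = ⊤) : H = (⊤ : G.Subgraph).induce H.verts := by
  ext a b
  · rfl
  · rw [coe_eq_top_iff] at h
    exact ⟨fun hab => ⟨H.edge_vert hab, H.edge_vert hab.symm, H.adj_sub hab⟩,
      fun ⟨ha, hb, hab⟩ => h a ha b hb hab.ne⟩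

lemma isClique_verts_of_coe_eq_top (h : H.coe = ⊤) : G.IsClique H.verts :=
  fun _ ha _ hb hab => H.adj_sub (coe_eq_top_iff.mp h _ ha _ hb hab)

lemma coe_induce_top_eq_top {s : Set V} (hs : G.IsClique s) :
    ((⊤ : G.Subgraph).induce s).coe = ⊤ :=
  coe_eq_top_iff.mpr fun _ ha _ hb hab => ⟨ha, hb, hs ha hb hab⟩

end Subgraph

def isoTopSubgraphEquivIsClique (G : SimpleGraph V) :
    {H : G.Subgraph // Nonempty (H.coe ≃g (⊤ : SimpleGraph W))} ≃
      {s : Set V // G.IsClique s ∧ Nonempty (s ≃ W)} where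
  toFun H :=
    have h := nonempty_iso_top_iff.mp H.2
    ⟨H.1.verts, Subgraph.isClique_verts_of_coe_eq_top h.1, h.2⟩
  invFun s := ⟨(⊤ : G.Subgraph).induce s.1,
    nonempty_iso_top_iff.mpr ⟨Subgraph.coe_induce_top_eq_top s.2.1, s.2.2⟩⟩
  left_inv H := Subtype.ext (Subgraph.eq_induce_top_of_coe_eq_top
    (nonempty_iso_top_iff.mp H.2).1).symm
  right_inv _ := rfl

lemma subCount_top_eq_card_isClique (G : SimpleGraph V) :
    subCount (⊤ : SimpleGraph W) G = Nat.card {s : Set V // G.IsClique s ∧ Nonempty (s ≃ W)} :=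
  Nat.card_congr G.isoTopSubgraphEquivIsClique

lemma _root_.Set.ncard_eq_card_sub_one_iff [Fintype V] [Nonempty V] {s : Set V} :
    s.ncard = Fintype.card V - 1 ↔ ∃ v, s = {v}ᶜ := by
  constructor
  · intro hs
    have : sᶜ.ncard = 1 := by
      have := Fintype.card_pos (α := V)
      rw [Set.ncard_compl, hs, Nat.card_eq_fintype_card]
      omega
    obtain ⟨v, hv⟩ := Set.ncard_eq_one.mp this
    exact ⟨v, by rw [← hv, compl_compl]⟩
  · rintro ⟨v, rfl⟩
    rw [Set.ncard_compl, Set.ncard_singleton, Nat.card_eq_fintype_card]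

lemma _root_.Set.nonempty_equiv_fin_iff {s : Set V} [Finite s] {m : ℕ} :
    Nonempty (s ≃ Fin m) ↔ s.ncard = m := by
  rw [← Finite.card_eq, Nat.card_fin, Nat.card_coe_set_eq]

lemma card_isClique_ncard_eq_card_sub_one [Fintype V] [Nonempty V] (G : SimpleGraph V) :
    Nat.card {s : Set V // G.IsClique s ∧ s.ncard = Fintype.card V - 1} =
      Nat.card {v // G.IsClique ({v}ᶜ : Set V)} := by
  refine (Nat.card_eq_of_bijective
    (fun v => ⟨{v.1}ᶜ, v.2, Set.ncard_eq_card_sub_one_iff.mpr ⟨v, rfl⟩⟩) ⟨?_, ?_⟩).symm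
  · exact fun v w hvw =>
      Subtype.ext (Set.singleton_injective (compl_injective (congrArg Subtype.val hvw)))
  · rintro ⟨s, hs, hcard⟩
    obtain ⟨v, rfl⟩ := Set.ncard_eq_card_sub_one_iff.mp hcard
    exact ⟨⟨v, hs⟩, rfl⟩

lemma isClique_compl_singleton_iff [Fintype V] [DecidableEq V] (G : SimpleGraph V)
    [DecidableRel G.Adj] (v : V) :
    G.IsClique ({v}ᶜ : Set V) ↔ Gᶜ.degree v = #Gᶜ.edgeFinset := by
  have hsub : Gᶜ.edgeFinset ⊆ Gᶜ.incidenceFinset v ↔ G.IsClique ({v}ᶜ : Set V) := by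
    simp only [subset_iff, mem_edgeFinset, mem_incidenceFinset, incidenceSet, Set.mem_ofPred_eq,
      Sym2.forall, mem_edgeSet, compl_adj, ne_eq, Sym2.mem_iff, and_imp, isClique_iff,
      Set.Pairwise, Set.mem_compl_iff, Set.mem_singleton_iff]
    exact ⟨fun h a ha b hb hab => by_contra fun hG => by
        rcases (h a b hab hG).2 with rfl | rfl <;> contradiction,
      fun h a b hab hG => ⟨⟨hab, hG⟩, by_contra fun hv => hG (h (by tauto) (by tauto) hab)⟩⟩
  have hle := Gᶜ.incidenceFinset_subset v
  rw [← hsub, ← card_incidenceFinset_eq_degree]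
  exact ⟨fun h => congrArg card (Subset.antisymm hle h),
    fun h => (eq_of_subset_of_card_le hle h.ge).ge⟩

lemma subCount_top_card_sub_one [Fintype V] [Nonempty V] [DecidableEq V] (G : SimpleGraph V)
    [DecidableRel G.Adj] :
    subCount (⊤ : SimpleGraph (Fin (Fintype.card V - 1))) G =
      Nat.card {v // Gᶜ.degree v = #Gᶜ.edgeFinset} := by
  rw [subCount_top_eq_card_isClique,
    ← Nat.card_congr (Equiv.subtypeEquivRight G.isClique_compl_singleton_iff),
    ← card_isClique_ncard_eq_card_sub_one]
  exact Nat.card_congr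
    (Equiv.subtypeEquivRight fun _ => and_congr_right' Set.nonempty_equiv_fin_iff)

lemma _root_.deg_eq_degree (x : SimpleGraph V) (v : V) [Fintype (x.neighborSet v)] :
    deg x v = x.degree v := by
  rw [← card_neighborSet_eq_degree, ← Nat.card_eq_fintype_card]
  rfl

lemma exists_equiv_degree_eq [Fintype V] [Fintype W] {x : SimpleGraph V} {y : SimpleGraph W}
    [DecidableRel x.Adj] [DecidableRel y.Adj] (h : ∀ j, nDeg x j = nDeg y j) :
    ∃ σ : V ≃ W, ∀ v, y.degree (σ v) = x.degree v := by
  let e j := (Finite.card_eq.mp (h j)).some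
  refine ⟨Equiv.ofFiberEquiv e, fun v => ?_⟩
  rw [← deg_eq_degree, ← deg_eq_degree]
  exact Equiv.ofFiberEquiv_map e v

lemma card_edgeFinset_eq_of_degree_eq [Fintype V] [Fintype W] {x : SimpleGraph V}
    {y : SimpleGraph W} [DecidableRel x.Adj] [DecidableRel y.Adj] (σ : V ≃ W)
    (h : ∀ v, y.degree (σ v) = x.degree v) : #x.edgeFinset = #y.edgeFinset := by
  have hx := x.sum_degrees_eq_twice_card_edges
  have hy := y.sum_degrees_eq_twice_card_edges
  rw [← σ.sum_comp] at hy
  simp only [h] at hy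
  omega

end SimpleGraph

open SimpleGraph

theorem stmt6_general {V : Type*} [Fintype V]
    (x y : SimpleGraph V) (hdeg : ∀ j : ℕ, nDeg x j = nDeg y j) :
    subCount (⊤ : SimpleGraph (Fin (Fintype.card V - 1))) x
      = subCount (⊤ : SimpleGraph (Fin (Fintype.card V - 1))) y := by
  classical
  cases isEmpty_or_nonempty V
  · rw [Subsingleton.elim x y]
  obtain ⟨σ, hσ⟩ := exists_equiv_degree_eq hdeg
  have hσc : ∀ v, yᶜ.degree (σ v) = xᶜ.degree v := fun v => by
    rw [degree_compl, degree_compl, hσ]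
  rw [subCount_top_card_sub_one, subCount_top_card_sub_one, card_edgeFinset_eq_of_degree_eq σ hσc]
  exact Nat.card_congr (σ.subtypeEquiv fun v => by rw [hσc])

/-- If `|N| = n ≥ 2` and `x`, `y` are simple graphs on `N` with identical
degree distributions, then they contain the same number of subgraphs isomorphic to the
complete graph `K_{n−1}`. -/
theorem stmt6 {V : Type*} [Fintype V] [DecidableEq V] (hn : 2 ≤ Fintype.card V)
    (x y : SimpleGraph V) (hdeg : ∀ j : ℕ, nDeg x j = nDeg y j) :
    subCount (⊤ : SimpleGraph (Fin (Fintype.card V - 1))) x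
      = subCount (⊤ : SimpleGraph (Fin (Fintype.card V - 1))) y :=
  stmt6_general x y hdeg
end

section
/- Let X = (X_d, d ∈ D(N)) be a random network on a finite node set N, and for each nonempty edge set B ⊆ D(N) let z_B = P(X_d = 1 for all d ∈ B). Then X is dissociated if and only if for every nonempty B ⊆ D(N) it holds that z_B = z_{C_1} · z_{C_2} · … · z_{C_k}, where C_1, …, C_k are the edge sets of the connected components of the graph on N with edge set B (viewed without isolated vertices). -/
open MeasureTheory
open scoped Classical

/-- Both endpoints of the dyad `d` belong to the node set `s`. -/
def dyadIn {V : Type*} (d : Dyad V) (s : Set V) : Prop := ∀ v ∈ d.1, v ∈ s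

/-- A random network is dissociated if, for every pair of disjoint node sets `N₁`, `N₂`,
the families `(X_d : d ∈ D(N₁))` and `(X_d : d ∈ D(N₂))` are independent. -/
def IsDissociated {V Ω : Type*} [MeasurableSpace Ω] (μ : Measure Ω)
    (X : Dyad V → Ω → Bool) : Prop :=
  ∀ N₁ N₂ : Set V, Disjoint N₁ N₂ → ∀ f g : Dyad V → Bool,
    μ ({ω | ∀ d : Dyad V, dyadIn d N₁ → X d ω = f d} ∩
        {ω | ∀ d : Dyad V, dyadIn d N₂ → X d ω = g d})
      = μ {ω | ∀ d : Dyad V, dyadIn d N₁ → X d ω = f d} *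
          μ {ω | ∀ d : Dyad V, dyadIn d N₂ → X d ω = g d}

/-- The set of nodes covered by a set of dyads `C`. -/
def dyadSupp {V : Type*} (C : Set (Dyad V)) : Set V := {v | ∃ d ∈ C, v ∈ d.1}

/-- The graph on the node set `V` whose edges are the dyads in `C`. -/
def graphOfDyads {V : Type*} (C : Set (Dyad V)) : SimpleGraph V :=
  SimpleGraph.fromEdgeSet (Subtype.val '' C)

/-- `C` is a nonempty connected edge set: the graph it spans (viewed without isolated
vertices, i.e. on its support) is connected. -/
def IsConnEdgeSet {V : Type*} (C : Set (Dyad V)) : Prop :=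
  C.Nonempty ∧ ∀ u ∈ dyadSupp C, ∀ v ∈ dyadSupp C, (graphOfDyads C).Reachable u v

namespace Stmt11Aux

variable {V : Type*} [Fintype V] [DecidableEq V]

lemma sym2_exists_mem (z : Sym2 V) : ∃ x, x ∈ z := ⟨z.out.1, z.out_fst_mem⟩

lemma not_dyadIn_both {N₁ N₂ : Set V} (hN : Disjoint N₁ N₂) {d : Dyad V}
    (h1 : dyadIn d N₁) (h2 : dyadIn d N₂) : False := by
  obtain ⟨x, hx⟩ := sym2_exists_mem d.1
  exact Set.disjoint_left.mp hN (h1 x hx) (h2 x hx)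

lemma reach_endpoints {B : Set (Dyad V)} {d : Dyad V} (hd : d ∈ B) {u v : V}
    (hu : u ∈ d.1) (hv : v ∈ d.1) : (graphOfDyads B).Reachable u v := by
  by_cases h : u = v
  · subst h; exact SimpleGraph.Reachable.refl _
  · apply SimpleGraph.Adj.reachable
    rw [graphOfDyads, SimpleGraph.fromEdgeSet_adj]
    refine ⟨?_, h⟩
    have : d.1 = s(u, v) := (Sym2.mem_and_mem_iff h).mp ⟨hu, hv⟩
    rw [← this]
    exact ⟨d, hd, rfl⟩

/-- The connected component of `d` inside the dyad set `B`. -/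
def comp (B : Set (Dyad V)) (d : Dyad V) : Set (Dyad V) :=
  {d' | d' ∈ B ∧ ∃ u ∈ d.1, ∃ v ∈ d'.1, (graphOfDyads B).Reachable u v}

lemma comp_subset (B : Set (Dyad V)) (d : Dyad V) : comp B d ⊆ B := fun _ h => h.1

lemma mem_comp_self {B : Set (Dyad V)} {d : Dyad V} (hd : d ∈ B) : d ∈ comp B d := by
  obtain ⟨x, hx⟩ := sym2_exists_mem d.1
  exact ⟨hd, x, hx, x, hx, SimpleGraph.Reachable.refl x⟩

lemma comp_reach {B : Set (Dyad V)} {d d' : Dyad V} (hd : d ∈ B) (h : d' ∈ comp B d)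
    {u v : V} (hu : u ∈ d.1) (hv : v ∈ d'.1) : (graphOfDyads B).Reachable u v := by
  obtain ⟨hd', a, ha, b, hb, hab⟩ := h
  exact ((reach_endpoints hd hu ha).trans hab).trans (reach_endpoints hd' hb hv)

lemma comp_eq_of_reach {B : Set (Dyad V)} {d e : Dyad V} (hd : d ∈ B) (he : e ∈ B)
    {u v : V} (hu : u ∈ d.1) (hv : v ∈ e.1) (h : (graphOfDyads B).Reachable u v) :
    comp B d = comp B e := by
  ext d'
  constructor
  · rintro ⟨hd', a, ha, b, hb, hab⟩
    exact ⟨hd', v, hv, b, hb, (h.symm.trans (reach_endpoints hd hu ha)).trans hab⟩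
  · rintro ⟨hd', a, ha, b, hb, hab⟩
    exact ⟨hd', u, hu, b, hb, (h.trans (reach_endpoints he hv ha)).trans hab⟩

lemma comp_supp_disjoint {B : Set (Dyad V)} {d e : Dyad V} (hd : d ∈ B) (he : e ∈ B)
    (h : comp B d ≠ comp B e) :
    Disjoint (dyadSupp (comp B d)) (dyadSupp (comp B e)) := by
  rw [Set.disjoint_left]
  rintro v ⟨d', hd', hv⟩ ⟨e', he', hv'⟩
  obtain ⟨u, hu⟩ := sym2_exists_mem d.1
  obtain ⟨w, hw⟩ := sym2_exists_mem e.1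
  have h1 : (graphOfDyads B).Reachable u v := comp_reach hd hd' hu hv
  have h2 : (graphOfDyads B).Reachable w v := comp_reach he he' hw hv'
  exact h (comp_eq_of_reach hd he hu hw (h1.trans h2.symm))

lemma comp_isConn {B : Set (Dyad V)} {d : Dyad V} (hd : d ∈ B) :
    IsConnEdgeSet (comp B d) := by
  refine ⟨⟨d, mem_comp_self hd⟩, ?_⟩
  rintro u ⟨d₁, hd₁, hu⟩ v ⟨d₂, hd₂, hv⟩
  obtain ⟨w, hw⟩ := sym2_exists_mem d.1
  have hG : (graphOfDyads B).Reachable u v :=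
    (comp_reach hd hd₁ hw hu).symm.trans (comp_reach hd hd₂ hw hv)
  obtain ⟨p⟩ := hG
  refine ⟨p.transfer (graphOfDyads (comp B d)) ?_⟩
  intro e he
  have heB : e ∈ (graphOfDyads B).edgeSet := p.edges_subset_edgeSet he
  rw [graphOfDyads, SimpleGraph.edgeSet_fromEdgeSet] at heB
  obtain ⟨heB1, heB2⟩ := heB
  obtain ⟨e₀, he₀B, he₀⟩ := heB1
  rw [graphOfDyads, SimpleGraph.edgeSet_fromEdgeSet]
  refine ⟨⟨e₀, ?_, he₀⟩, heB2⟩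
  -- show e₀ ∈ comp B d
  obtain ⟨a, ha⟩ := sym2_exists_mem e₀.1
  -- a is a vertex of an edge of the walk p, hence in p.support, hence reachable from u
  have haw : a ∈ p.support := by
    obtain ⟨b, hab⟩ := Sym2.mem_iff_exists.mp (he₀ ▸ ha : a ∈ e)
    exact p.fst_mem_support_of_mem_edges (hab ▸ he)
  have hreach : (graphOfDyads B).Reachable u a := ⟨p.takeUntil a haw⟩
  exact ⟨he₀B, w, hw, a, ha, (comp_reach hd hd₁ hw hu).trans hreach⟩

lemma decomp (B : Set (Dyad V)) :
    ∃ (k : ℕ) (C : Fin k → Set (Dyad V)),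
      (∀ i, IsConnEdgeSet (C i)) ∧
      (∀ i j, i ≠ j → Disjoint (dyadSupp (C i)) (dyadSupp (C j))) ∧
      (⋃ i, C i) = B := by
  classical
  let S : Finset (Set (Dyad V)) := (Finset.univ.filter (· ∈ B)).image (comp B)
  have hS : ∀ s ∈ S, ∃ d ∈ B, s = comp B d := by
    intro s hs
    simp only [S, Finset.mem_image, Finset.mem_filter, Finset.mem_univ, true_and] at hs
    obtain ⟨d, hd, h⟩ := hs
    exact ⟨d, hd, h.symm⟩
  refine ⟨S.card, fun i => ((S.equivFin.symm i : S) : Set (Dyad V)), ?_, ?_, ?_⟩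
  · intro i
    obtain ⟨d, hd, hh⟩ := hS _ (S.equivFin.symm i).2
    show IsConnEdgeSet ((S.equivFin.symm i : S) : Set (Dyad V))
    rw [hh]
    exact comp_isConn hd
  · intro i j hij
    obtain ⟨d, hd, hhd⟩ := hS _ (S.equivFin.symm i).2
    obtain ⟨e, he, hhe⟩ := hS _ (S.equivFin.symm j).2
    show Disjoint (dyadSupp ((S.equivFin.symm i : S) : Set (Dyad V)))
      (dyadSupp ((S.equivFin.symm j : S) : Set (Dyad V)))
    rw [hhd, hhe]
    apply comp_supp_disjoint hd he
    intro hcontra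
    apply hij
    have : (S.equivFin.symm i : S) = (S.equivFin.symm j : S) :=
      Subtype.ext (by rw [hhd, hhe, hcontra])
    exact S.equivFin.symm.injective this
  · apply Set.Subset.antisymm
    · intro d hd
      obtain ⟨i, hds⟩ := Set.mem_iUnion.mp hd
      obtain ⟨e, he, hh⟩ := hS _ (S.equivFin.symm i).2
      exact comp_subset B e (hh ▸ hds)
    · intro d hd
      have hmem : comp B d ∈ S := by
        simp only [S, Finset.mem_image, Finset.mem_filter, Finset.mem_univ, true_and]
        exact ⟨d, hd, rfl⟩
      refine Set.mem_iUnion.mpr ⟨S.equivFin ⟨comp B d, hmem⟩, ?_⟩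
      simp only [Equiv.symm_apply_apply]
      exact mem_comp_self hd

section Measure

variable {Ω : Type*} [MeasurableSpace Ω] (μ : Measure Ω) [IsProbabilityMeasure μ]
  (X : Dyad V → Ω → Bool)

lemma measurable_event (hmeas : ∀ d : Dyad V, Measurable (X d))
    (S : Set (Dyad V)) (f : Dyad V → Bool) :
    MeasurableSet {ω | ∀ d ∈ S, X d ω = f d} := by
  have h : {ω | ∀ d ∈ S, X d ω = f d} = ⋂ d ∈ S, (X d) ⁻¹' {f d} := by
    ext ω; simp
  rw [h]
  exact MeasurableSet.biInter (Set.to_countable _)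
    (fun d _ => (hmeas d) (measurableSet_singleton _))

lemma measurable_event' (hmeas : ∀ d : Dyad V, Measurable (X d))
    (N : Set V) (f : Dyad V → Bool) :
    MeasurableSet {ω | ∀ d : Dyad V, dyadIn d N → X d ω = f d} :=
  measurable_event X hmeas {d | dyadIn d N} f

/-- The finset of Boolean assignments that are `true` on `B` and canonically `true`
outside the dyads of `N`. -/
noncomputable def reps (N : Set V) (B : Set (Dyad V)) : Finset (Dyad V → Bool) :=
  Finset.univ.filter (fun f : Dyad V → Bool => ∀ d, (d ∈ B ∨ ¬ dyadIn d N) → f d = true)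

lemma ev_eq (N : Set V) (B : Set (Dyad V)) (hB : ∀ d ∈ B, dyadIn d N) :
    {ω | ∀ d ∈ B, X d ω = true}
      = ⋃ f ∈ reps N B, {ω | ∀ d : Dyad V, dyadIn d N → X d ω = f d} := by
  ext ω
  simp only [Set.mem_setOf_eq, Set.mem_iUnion, exists_prop]
  constructor
  · intro h
    refine ⟨fun d => if dyadIn d N then X d ω else true, ?_, ?_⟩
    · simp only [reps, Finset.mem_filter, Finset.mem_univ, true_and]
      intro d hd
      rcases hd with hd | hd
      · show (if dyadIn d N then X d ω else true) = true
        rw [if_pos (hB d hd)]; exact h d hd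
      · show (if dyadIn d N then X d ω else true) = true
        rw [if_neg hd]
    · intro d hd
      show X d ω = if dyadIn d N then X d ω else true
      rw [if_pos hd]
  · rintro ⟨f, hf, hωf⟩ d hd
    simp only [reps, Finset.mem_filter, Finset.mem_univ, true_and] at hf
    rw [hωf d (hB d hd)]
    exact hf d (Or.inl hd)

lemma ev_disjoint (N : Set V) (B : Set (Dyad V)) {f g : Dyad V → Bool}
    (hf : f ∈ reps N B) (hg : g ∈ reps N B) (hfg : f ≠ g) :
    Disjoint {ω | ∀ d : Dyad V, dyadIn d N → X d ω = f d}
      {ω | ∀ d : Dyad V, dyadIn d N → X d ω = g d} := by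
  simp only [reps, Finset.mem_filter, Finset.mem_univ, true_and] at hf hg
  rw [Set.disjoint_left]
  intro ω h1 h2
  apply hfg
  funext d
  by_cases hd : dyadIn d N
  · rw [← h1 d hd, ← h2 d hd]
  · rw [hf d (Or.inr hd), hg d (Or.inr hd)]

lemma sum_rep (hmeas : ∀ d : Dyad V, Measurable (X d)) (N : Set V) (B : Set (Dyad V))
    (hB : ∀ d ∈ B, dyadIn d N) :
    μ {ω | ∀ d ∈ B, X d ω = true}
      = ∑ f ∈ reps N B, μ {ω | ∀ d : Dyad V, dyadIn d N → X d ω = f d} := by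
  rw [ev_eq X N B hB]
  exact measure_biUnion_finset
    (fun f hf g hg hfg => ev_disjoint X N B hf hg hfg)
    (fun f _ => measurable_event' X hmeas N f)

lemma diss_two (hmeas : ∀ d : Dyad V, Measurable (X d)) (h : IsDissociated μ X)
    {N₁ N₂ : Set V} (hN : Disjoint N₁ N₂) (B₁ B₂ : Set (Dyad V))
    (h₁ : ∀ d ∈ B₁, dyadIn d N₁) (h₂ : ∀ d ∈ B₂, dyadIn d N₂) :
    μ {ω | ∀ d ∈ B₁ ∪ B₂, X d ω = true}
      = μ {ω | ∀ d ∈ B₁, X d ω = true} * μ {ω | ∀ d ∈ B₂, X d ω = true} := by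
  have hsplit : {ω | ∀ d ∈ B₁ ∪ B₂, X d ω = true}
      = {ω | ∀ d ∈ B₁, X d ω = true} ∩ {ω | ∀ d ∈ B₂, X d ω = true} := by
    ext ω
    simp only [Set.mem_setOf_eq, Set.mem_inter_iff, Set.mem_union]
    constructor
    · intro hh; exact ⟨fun d hd => hh d (Or.inl hd), fun d hd => hh d (Or.inr hd)⟩
    · rintro ⟨ha, hb⟩ d (hd | hd); exacts [ha d hd, hb d hd]
  have key : {ω | ∀ d ∈ B₁ ∪ B₂, X d ω = true}
      = ⋃ p ∈ reps N₁ B₁ ×ˢ reps N₂ B₂,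
          ({ω | ∀ d : Dyad V, dyadIn d N₁ → X d ω = p.1 d} ∩
            {ω | ∀ d : Dyad V, dyadIn d N₂ → X d ω = p.2 d}) := by
    rw [hsplit, ev_eq X N₁ B₁ h₁, ev_eq X N₂ B₂ h₂]
    ext ω
    simp only [Set.mem_inter_iff, Set.mem_iUnion, exists_prop, Finset.mem_product]
    constructor
    · rintro ⟨⟨f, hf, hωf⟩, ⟨g, hg, hωg⟩⟩
      exact ⟨(f, g), ⟨hf, hg⟩, hωf, hωg⟩
    · rintro ⟨p, ⟨hp1, hp2⟩, hω1, hω2⟩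
      exact ⟨⟨p.1, hp1, hω1⟩, ⟨p.2, hp2, hω2⟩⟩
  rw [key, measure_biUnion_finset, sum_rep μ X hmeas N₁ B₁ h₁, sum_rep μ X hmeas N₂ B₂ h₂,
    Finset.sum_mul_sum, Finset.sum_product]
  · refine Finset.sum_congr rfl fun f hf => Finset.sum_congr rfl fun g hg => ?_
    exact h N₁ N₂ hN f g
  · rintro ⟨f, g⟩ hfg ⟨f', g'⟩ hfg' hne
    simp only [Finset.mem_coe, Finset.mem_product] at hfg hfg'
    have : f ≠ f' ∨ g ≠ g' := by
      by_contra hc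
      push_neg at hc
      exact hne (Prod.ext hc.1 hc.2)
    rcases this with hne' | hne'
    · exact Set.disjoint_of_subset Set.inter_subset_left Set.inter_subset_left
        (ev_disjoint X N₁ B₁ hfg.1 hfg'.1 hne')
    · exact Set.disjoint_of_subset Set.inter_subset_right Set.inter_subset_right
        (ev_disjoint X N₂ B₂ hfg.2 hfg'.2 hne')
  · rintro ⟨f, g⟩ _
    exact (measurable_event' X hmeas N₁ f).inter (measurable_event' X hmeas N₂ g)

lemma forward (hmeas : ∀ d : Dyad V, Measurable (X d)) (h : IsDissociated μ X) :
    ∀ (k : ℕ) (C : Fin k → Set (Dyad V)),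
      (∀ i j, i ≠ j → Disjoint (dyadSupp (C i)) (dyadSupp (C j))) →
      μ {ω | ∀ d ∈ ⋃ i, C i, X d ω = true}
        = ∏ i, μ {ω | ∀ d ∈ C i, X d ω = true} := by
  intro k
  induction k with
  | zero =>
    intro C _
    have : (⋃ i : Fin 0, C i) = ∅ := by simp
    rw [this]
    simp only [Set.mem_empty_iff_false, false_implies, implies_true, Set.setOf_true]
    simp
  | succ n ih =>
    intro C hdisj
    have hunion : (⋃ i, C i) = C 0 ∪ ⋃ i : Fin n, C i.succ := by
      ext d
      simp only [Set.mem_iUnion, Set.mem_union]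
      exact ⟨fun ⟨i, hi⟩ => by
        rcases Fin.eq_zero_or_eq_succ i with rfl | ⟨j, rfl⟩
        · exact Or.inl hi
        · exact Or.inr ⟨j, hi⟩,
        fun hh => by rcases hh with hh | ⟨j, hj⟩; exacts [⟨0, hh⟩, ⟨j.succ, hj⟩]⟩
    have hd2 : ∀ i j : Fin n, i ≠ j →
        Disjoint (dyadSupp (C i.succ)) (dyadSupp (C j.succ)) :=
      fun i j hij => hdisj i.succ j.succ (fun hc => hij (Fin.succ_injective n hc))
    rw [hunion,
      diss_two μ X hmeas h
        (Set.disjoint_iUnion_right.mpr fun i =>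
          hdisj 0 i.succ (Ne.symm (Fin.succ_ne_zero i)))
        (C 0) (⋃ i : Fin n, C i.succ)
        (fun d hd v hv => ⟨d, hd, hv⟩)
        (fun d hd v hv => by
          obtain ⟨i, hds⟩ := Set.mem_iUnion.mp hd
          exact Set.mem_iUnion.mpr ⟨i, d, hds, hv⟩),
      ih (fun i => C i.succ) hd2, Fin.prod_univ_succ]

lemma mixed (hmeas : ∀ d : Dyad V, Measurable (X d))
    (H : ∀ (k : ℕ) (C : Fin k → Set (Dyad V)),
        (∀ i, IsConnEdgeSet (C i)) →
        (∀ i j, i ≠ j → Disjoint (dyadSupp (C i)) (dyadSupp (C j))) →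
        μ {ω | ∀ d ∈ ⋃ i, C i, X d ω = true}
          = ∏ i, μ {ω | ∀ d ∈ C i, X d ω = true})
    {N₁ N₂ : Set V} (hN : Disjoint N₁ N₂) (B₁ B₂ : Set (Dyad V))
    (h₁ : ∀ d ∈ B₁, dyadIn d N₁) (h₂ : ∀ d ∈ B₂, dyadIn d N₂) :
    μ {ω | ∀ d ∈ B₁ ∪ B₂, X d ω = true}
      = μ {ω | ∀ d ∈ B₁, X d ω = true} * μ {ω | ∀ d ∈ B₂, X d ω = true} := by
  obtain ⟨k₁, C₁, hc₁, hd₁, hu₁⟩ := decomp B₁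
  obtain ⟨k₂, C₂, hc₂, hd₂, hu₂⟩ := decomp B₂
  have hs₁ : ∀ i, dyadSupp (C₁ i) ⊆ N₁ := by
    rintro i v ⟨d, hd, hvd⟩
    exact h₁ d (hu₁ ▸ Set.mem_iUnion.mpr ⟨i, hd⟩) v hvd
  have hs₂ : ∀ i, dyadSupp (C₂ i) ⊆ N₂ := by
    rintro i v ⟨d, hd, hvd⟩
    exact h₂ d (hu₂ ▸ Set.mem_iUnion.mpr ⟨i, hd⟩) v hvd
  set A : Fin (k₁ + k₂) → Set (Dyad V) :=
    fun i => if h : (i : ℕ) < k₁ then C₁ ⟨i, h⟩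
      else C₂ ⟨(i : ℕ) - k₁, by have := i.isLt; omega⟩ with hA
  have hAc : ∀ i : Fin k₁, A (Fin.castAdd k₂ i) = C₁ i := by
    intro i
    have h : ((Fin.castAdd k₂ i : Fin (k₁ + k₂)) : ℕ) < k₁ := by
      simp [Fin.coe_castAdd, i.isLt]
    have h2 : A (Fin.castAdd k₂ i) = C₁ ⟨((Fin.castAdd k₂ i : Fin (k₁ + k₂)) : ℕ), h⟩ :=
      dif_pos h
    rw [h2]
    exact congrArg C₁ (Fin.ext (by simp))
  have hAn : ∀ j : Fin k₂, A (Fin.natAdd k₁ j) = C₂ j := by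
    intro j
    have h : ¬ ((Fin.natAdd k₁ j : Fin (k₁ + k₂)) : ℕ) < k₁ := by
      simp [Fin.coe_natAdd]
    have h2 : A (Fin.natAdd k₁ j)
        = C₂ ⟨((Fin.natAdd k₁ j : Fin (k₁ + k₂)) : ℕ) - k₁, by
            have := (Fin.natAdd k₁ j).isLt; omega⟩ :=
      dif_neg h
    rw [h2]
    exact congrArg C₂ (Fin.ext (by simp))
  have hAconn : ∀ i, IsConnEdgeSet (A i) := by
    intro i
    by_cases h : (i : ℕ) < k₁
    · have h2 : A i = C₁ ⟨(i : ℕ), h⟩ := dif_pos h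
      rw [h2]; exact hc₁ _
    · have h2 : A i = C₂ ⟨(i : ℕ) - k₁, by have := i.isLt; omega⟩ := dif_neg h
      rw [h2]; exact hc₂ _
  have hAdisj : ∀ i j, i ≠ j → Disjoint (dyadSupp (A i)) (dyadSupp (A j)) := by
    intro i j hij
    by_cases hi : (i : ℕ) < k₁ <;> by_cases hj : (j : ℕ) < k₁
    · have e1 : A i = C₁ ⟨(i : ℕ), hi⟩ := dif_pos hi
      have e2 : A j = C₁ ⟨(j : ℕ), hj⟩ := dif_pos hj
      rw [e1, e2]
      refine hd₁ _ _ (fun hc => hij (Fin.ext ?_))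
      have := congrArg Fin.val hc
      simpa using this
    · have e1 : A i = C₁ ⟨(i : ℕ), hi⟩ := dif_pos hi
      have e2 : A j = C₂ ⟨(j : ℕ) - k₁, by have := j.isLt; omega⟩ := dif_neg hj
      rw [e1, e2]
      exact hN.mono (hs₁ _) (hs₂ _)
    · have e1 : A i = C₂ ⟨(i : ℕ) - k₁, by have := i.isLt; omega⟩ := dif_neg hi
      have e2 : A j = C₁ ⟨(j : ℕ), hj⟩ := dif_pos hj
      rw [e1, e2]
      exact (hN.mono (hs₁ _) (hs₂ _)).symm
    · have e1 : A i = C₂ ⟨(i : ℕ) - k₁, by have := i.isLt; omega⟩ := dif_neg hi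
      have e2 : A j = C₂ ⟨(j : ℕ) - k₁, by have := j.isLt; omega⟩ := dif_neg hj
      rw [e1, e2]
      refine hd₂ _ _ (fun hc => hij (Fin.ext ?_))
      have hval := congrArg Fin.val hc
      simp only [] at hval
      have hi' := i.isLt
      have hj' := j.isLt
      omega
  have hAu : (⋃ i, A i) = B₁ ∪ B₂ := by
    ext d
    simp only [Set.mem_iUnion, Set.mem_union]
    constructor
    · rintro ⟨i, hi⟩
      have hi' : d ∈ A i := hi
      by_cases h : (i : ℕ) < k₁
      · have h2 : A i = C₁ ⟨(i : ℕ), h⟩ := dif_pos h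
        rw [h2] at hi'
        exact Or.inl (hu₁ ▸ Set.mem_iUnion.mpr ⟨_, hi'⟩)
      · have h2 : A i = C₂ ⟨(i : ℕ) - k₁, by have := i.isLt; omega⟩ := dif_neg h
        rw [h2] at hi'
        exact Or.inr (hu₂ ▸ Set.mem_iUnion.mpr ⟨_, hi'⟩)
    · rintro (hd | hd)
      · rw [← hu₁] at hd
        obtain ⟨i, hi⟩ := Set.mem_iUnion.mp hd
        exact ⟨Fin.castAdd k₂ i, by rw [hAc]; exact hi⟩
      · rw [← hu₂] at hd
        obtain ⟨j, hj⟩ := Set.mem_iUnion.mp hd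
        exact ⟨Fin.natAdd k₁ j, by rw [hAn]; exact hj⟩
  calc μ {ω | ∀ d ∈ B₁ ∪ B₂, X d ω = true}
      = ∏ i : Fin (k₁ + k₂), μ {ω | ∀ d ∈ A i, X d ω = true} := by
        rw [← hAu]; exact H _ A hAconn hAdisj
    _ = (∏ i : Fin k₁, μ {ω | ∀ d ∈ C₁ i, X d ω = true}) *
          ∏ j : Fin k₂, μ {ω | ∀ d ∈ C₂ j, X d ω = true} := by
        rw [Fin.prod_univ_add]
        congr 1
        · exact Finset.prod_congr rfl fun i _ => by rw [hAc i]
        · exact Finset.prod_congr rfl fun j _ => by rw [hAn j]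
    _ = μ {ω | ∀ d ∈ B₁, X d ω = true} * μ {ω | ∀ d ∈ B₂, X d ω = true} := by
        rw [← H k₁ C₁ hc₁ hd₁, ← H k₂ C₂ hc₂ hd₂, hu₁, hu₂]

/-- The event that `X` is `true` on `T` and `false` on `F`. -/
def Wev (T F : Finset (Dyad V)) : Set Ω :=
  {ω | ∀ d ∈ T, X d ω = true} ∩ {ω | ∀ d ∈ F, X d ω = false}

lemma Wev_meas (hmeas : ∀ d : Dyad V, Measurable (X d)) (T F : Finset (Dyad V)) :
    MeasurableSet (Wev X T F) :=
  (measurable_event X hmeas (↑T) (fun _ => true)).inter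
    (measurable_event X hmeas (↑F) (fun _ => false))

lemma Wsplit (hmeas : ∀ d : Dyad V, Measurable (X d)) {T F : Finset (Dyad V)}
    {d : Dyad V} (hT : d ∉ T) (hF : d ∉ F) :
    μ (Wev X T F) = μ (Wev X (insert d T) F) + μ (Wev X T (insert d F)) := by
  have hu : Wev X T F = Wev X (insert d T) F ∪ Wev X T (insert d F) := by
    ext ω
    simp only [Wev, Set.mem_inter_iff, Set.mem_setOf_eq, Set.mem_union, Finset.mem_insert]
    constructor
    · rintro ⟨h1, h2⟩
      cases hx : X d ω
      · exact Or.inr ⟨h1, fun d' hd' => by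
          rcases hd' with rfl | hd'; exacts [hx, h2 d' hd']⟩
      · exact Or.inl ⟨fun d' hd' => by
          rcases hd' with rfl | hd'; exacts [hx, h1 d' hd'], h2⟩
    · rintro (⟨h1, h2⟩ | ⟨h1, h2⟩)
      · exact ⟨fun d' hd' => h1 d' (Or.inr hd'), h2⟩
      · exact ⟨h1, fun d' hd' => h2 d' (Or.inr hd')⟩
  have hdisj : Disjoint (Wev X (insert d T) F) (Wev X T (insert d F)) := by
    rw [Set.disjoint_left]
    rintro ω ⟨h1, h2⟩ ⟨h3, h4⟩
    have ht := h1 d (Finset.mem_insert_self d T)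
    have hf := h4 d (Finset.mem_insert_self d F)
    rw [ht] at hf
    exact Bool.noConfusion hf
  rw [hu, measure_union hdisj (Wev_meas X hmeas T (insert d F))]

lemma W1 {N₁ N₂ : Set V} (hN : Disjoint N₁ N₂)
    (hmeas : ∀ d : Dyad V, Measurable (X d))
    (hmix : ∀ T₁ T₂ : Finset (Dyad V), (∀ d ∈ T₁, dyadIn d N₁) →
      (∀ d ∈ T₂, dyadIn d N₂) →
      μ (Wev X (T₁ ∪ T₂) ∅) = μ (Wev X T₁ ∅) * μ (Wev X T₂ ∅)) :
    ∀ F₁ T₁ T₂ : Finset (Dyad V), (∀ d ∈ T₁, dyadIn d N₁) →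
      (∀ d ∈ F₁, dyadIn d N₁) → (∀ d ∈ T₂, dyadIn d N₂) → Disjoint T₁ F₁ →
      μ (Wev X (T₁ ∪ T₂) F₁) = μ (Wev X T₁ F₁) * μ (Wev X T₂ ∅) := by
  intro F₁
  induction F₁ using Finset.strongInduction with
  | _ F₁ ih =>
    intro T₁ T₂ hT₁ hF₁ hT₂ hdisj
    rcases F₁.eq_empty_or_nonempty with rfl | ⟨d, hd⟩
    · exact hmix T₁ T₂ hT₁ hT₂
    · set F' := F₁.erase d with hF'
      have hss : F' ⊂ F₁ := Finset.erase_ssubset hd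
      have hdT₁ : d ∉ T₁ := fun h => Finset.disjoint_left.mp hdisj h hd
      have hdT₂ : d ∉ T₂ := fun h => not_dyadIn_both hN (hF₁ d hd) (hT₂ d h)
      have hdF' : d ∉ F' := Finset.notMem_erase d F₁
      have hdTT : d ∉ T₁ ∪ T₂ := by
        simp only [Finset.mem_union]
        rintro (h | h); exacts [hdT₁ h, hdT₂ h]
      have e1 : insert d (T₁ ∪ T₂) = insert d T₁ ∪ T₂ := (Finset.insert_union d T₁ T₂).symm
      have e2 : insert d F' = F₁ := Finset.insert_erase hd
      have hF'sub : ∀ d' ∈ F', dyadIn d' N₁ := fun d' hd' => hF₁ d' (Finset.mem_of_mem_erase hd')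
      have hdisj' : Disjoint T₁ F' := hdisj.mono_right (Finset.erase_subset d F₁)
      have hT₁' : ∀ d' ∈ insert d T₁, dyadIn d' N₁ := by
        intro d' hd'
        rcases Finset.mem_insert.mp hd' with rfl | hd'
        exacts [hF₁ _ hd, hT₁ d' hd']
      have hdisj'' : Disjoint (insert d T₁) F' := by
        rw [Finset.disjoint_left]
        intro a ha haF'
        rcases Finset.mem_insert.mp ha with rfl | ha
        exacts [hdF' haF', Finset.disjoint_left.mp hdisj' ha haF']
      have s1 : μ (Wev X (T₁ ∪ T₂) F')
          = μ (Wev X (insert d T₁ ∪ T₂) F') + μ (Wev X (T₁ ∪ T₂) F₁) := by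
        rw [← e1, ← e2]
        exact Wsplit μ X hmeas hdTT hdF'
      have s2 : μ (Wev X T₁ F') = μ (Wev X (insert d T₁) F') + μ (Wev X T₁ F₁) := by
        rw [← e2]
        exact Wsplit μ X hmeas hdT₁ hdF'
      have ih1 := ih F' hss T₁ T₂ hT₁ hF'sub hT₂ hdisj'
      have ih2 := ih F' hss (insert d T₁) T₂ hT₁' hF'sub hT₂ hdisj''
      rw [ih1, ih2] at s1
      have s2' : μ (Wev X T₁ F') * μ (Wev X T₂ ∅)
          = μ (Wev X (insert d T₁) F') * μ (Wev X T₂ ∅)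
            + μ (Wev X T₁ F₁) * μ (Wev X T₂ ∅) := by
        rw [s2, add_mul]
      have hfin : μ (Wev X (insert d T₁) F') * μ (Wev X T₂ ∅) ≠ ⊤ :=
        ENNReal.mul_ne_top (measure_ne_top μ _) (measure_ne_top μ _)
      exact (ENNReal.add_right_inj hfin).mp (s1.symm.trans s2')

lemma W2 {N₁ N₂ : Set V} (hN : Disjoint N₁ N₂)
    (hmeas : ∀ d : Dyad V, Measurable (X d))
    (hmix : ∀ T₁ T₂ : Finset (Dyad V), (∀ d ∈ T₁, dyadIn d N₁) →
      (∀ d ∈ T₂, dyadIn d N₂) →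
      μ (Wev X (T₁ ∪ T₂) ∅) = μ (Wev X T₁ ∅) * μ (Wev X T₂ ∅)) :
    ∀ F₂ (T₁ F₁ T₂ : Finset (Dyad V)), (∀ d ∈ T₁, dyadIn d N₁) →
      (∀ d ∈ F₁, dyadIn d N₁) → (∀ d ∈ T₂, dyadIn d N₂) → (∀ d ∈ F₂, dyadIn d N₂) →
      Disjoint T₁ F₁ → Disjoint T₂ F₂ →
      μ (Wev X (T₁ ∪ T₂) (F₁ ∪ F₂)) = μ (Wev X T₁ F₁) * μ (Wev X T₂ F₂) := by
  intro F₂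
  induction F₂ using Finset.strongInduction with
  | _ F₂ ih =>
    intro T₁ F₁ T₂ hT₁ hF₁ hT₂ hF₂ hdisj₁ hdisj₂
    rcases F₂.eq_empty_or_nonempty with rfl | ⟨d, hd⟩
    · rw [Finset.union_empty]
      exact W1 μ X hN hmeas hmix F₁ T₁ T₂ hT₁ hF₁ hT₂ hdisj₁
    · set F' := F₂.erase d with hF'
      have hss : F' ⊂ F₂ := Finset.erase_ssubset hd
      have hdT₂ : d ∉ T₂ := fun h => Finset.disjoint_left.mp hdisj₂ h hd
      have hdT₁ : d ∉ T₁ := fun h => not_dyadIn_both hN (hT₁ d h) (hF₂ d hd)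
      have hdF₁ : d ∉ F₁ := fun h => not_dyadIn_both hN (hF₁ d h) (hF₂ d hd)
      have hdF' : d ∉ F' := Finset.notMem_erase d F₂
      have hdTT : d ∉ T₁ ∪ T₂ := by
        simp only [Finset.mem_union]
        rintro (h | h); exacts [hdT₁ h, hdT₂ h]
      have hdFF : d ∉ F₁ ∪ F' := by
        simp only [Finset.mem_union]
        rintro (h | h); exacts [hdF₁ h, hdF' h]
      have e1 : insert d (T₁ ∪ T₂) = T₁ ∪ insert d T₂ := (Finset.union_insert d T₁ T₂).symm
      have e2 : insert d (F₁ ∪ F') = F₁ ∪ F₂ := by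
        rw [← Finset.union_insert, hF', Finset.insert_erase hd]
      have e3 : insert d F' = F₂ := Finset.insert_erase hd
      have hF'sub : ∀ d' ∈ F', dyadIn d' N₂ := fun d' hd' => hF₂ d' (Finset.mem_of_mem_erase hd')
      have hdisj' : Disjoint T₂ F' := hdisj₂.mono_right (Finset.erase_subset d F₂)
      have hT₂' : ∀ d' ∈ insert d T₂, dyadIn d' N₂ := by
        intro d' hd'
        rcases Finset.mem_insert.mp hd' with rfl | hd'
        exacts [hF₂ _ hd, hT₂ d' hd']
      have hdisj'' : Disjoint (insert d T₂) F' := by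
        rw [Finset.disjoint_left]
        intro a ha haF'
        rcases Finset.mem_insert.mp ha with rfl | ha
        exacts [hdF' haF', Finset.disjoint_left.mp hdisj' ha haF']
      have s1 : μ (Wev X (T₁ ∪ T₂) (F₁ ∪ F'))
          = μ (Wev X (T₁ ∪ insert d T₂) (F₁ ∪ F'))
            + μ (Wev X (T₁ ∪ T₂) (F₁ ∪ F₂)) := by
        rw [← e1, ← e2]
        exact Wsplit μ X hmeas hdTT hdFF
      have s2 : μ (Wev X T₂ F') = μ (Wev X (insert d T₂) F') + μ (Wev X T₂ F₂) := by
        rw [← e3]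
        exact Wsplit μ X hmeas hdT₂ hdF'
      have ih1 := ih F' hss T₁ F₁ T₂ hT₁ hF₁ hT₂ hF'sub hdisj₁ hdisj'
      have ih2 := ih F' hss T₁ F₁ (insert d T₂) hT₁ hF₁ hT₂' hF'sub hdisj₁ hdisj''
      rw [ih1, ih2] at s1
      have s2' : μ (Wev X T₁ F₁) * μ (Wev X T₂ F')
          = μ (Wev X T₁ F₁) * μ (Wev X (insert d T₂) F')
            + μ (Wev X T₁ F₁) * μ (Wev X T₂ F₂) := by
        rw [s2, mul_add]
      have hfin : μ (Wev X T₁ F₁) * μ (Wev X (insert d T₂) F') ≠ ⊤ :=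
        ENNReal.mul_ne_top (measure_ne_top μ _) (measure_ne_top μ _)
      exact (ENNReal.add_right_inj hfin).mp (s1.symm.trans s2')

end Measure

end Stmt11Aux

/-- A random network `X` is dissociated iff for every nonempty edge set
`B ⊆ D(N)`, the Möbius parameter `z_B = P(X_d = 1 for all d ∈ B)` factorizes as the
product of the Möbius parameters of the edge sets of the connected components of `B`
(equivalently: of the pieces of any decomposition of `B` into connected edge sets with
pairwise disjoint node supports). -/
theorem stmt11 {V Ω : Type*} [Fintype V] [DecidableEq V] [MeasurableSpace Ω]
    (μ : Measure Ω) [IsProbabilityMeasure μ] (X : Dyad V → Ω → Bool)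
    (hmeas : ∀ d : Dyad V, Measurable (X d)) :
    IsDissociated μ X ↔
      ∀ (k : ℕ) (C : Fin k → Set (Dyad V)),
        (∀ i, IsConnEdgeSet (C i)) →
        (∀ i j, i ≠ j → Disjoint (dyadSupp (C i)) (dyadSupp (C j))) →
        μ {ω | ∀ d ∈ ⋃ i, C i, X d ω = true}
          = ∏ i, μ {ω | ∀ d ∈ C i, X d ω = true} := by
  constructor
  · intro h k C _ hdisj
    exact Stmt11Aux.forward μ X hmeas h k C hdisj
  · intro H
    intro N₁ N₂ hN f g
    classical
    set T₁ : Finset (Dyad V) := Finset.univ.filter (fun d => dyadIn d N₁ ∧ f d = true)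
      with hT₁def
    set F₁ : Finset (Dyad V) := Finset.univ.filter (fun d => dyadIn d N₁ ∧ f d = false)
      with hF₁def
    set T₂ : Finset (Dyad V) := Finset.univ.filter (fun d => dyadIn d N₂ ∧ g d = true)
      with hT₂def
    set F₂ : Finset (Dyad V) := Finset.univ.filter (fun d => dyadIn d N₂ ∧ g d = false)
      with hF₂def
    have hT₁ : ∀ d ∈ T₁, dyadIn d N₁ := by
      intro d hd; rw [hT₁def, Finset.mem_filter] at hd; exact hd.2.1
    have hF₁ : ∀ d ∈ F₁, dyadIn d N₁ := by
      intro d hd; rw [hF₁def, Finset.mem_filter] at hd; exact hd.2.1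
    have hT₂ : ∀ d ∈ T₂, dyadIn d N₂ := by
      intro d hd; rw [hT₂def, Finset.mem_filter] at hd; exact hd.2.1
    have hF₂ : ∀ d ∈ F₂, dyadIn d N₂ := by
      intro d hd; rw [hF₂def, Finset.mem_filter] at hd; exact hd.2.1
    have hdisj₁ : Disjoint T₁ F₁ := by
      rw [Finset.disjoint_left]
      intro a ha ha'
      rw [hT₁def, Finset.mem_filter] at ha
      rw [hF₁def, Finset.mem_filter] at ha'
      rw [ha.2.2] at ha'
      exact Bool.noConfusion ha'.2.2
    have hdisj₂ : Disjoint T₂ F₂ := by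
      rw [Finset.disjoint_left]
      intro a ha ha'
      rw [hT₂def, Finset.mem_filter] at ha
      rw [hF₂def, Finset.mem_filter] at ha'
      rw [ha.2.2] at ha'
      exact Bool.noConfusion ha'.2.2
    have hmix : ∀ T₁' T₂' : Finset (Dyad V), (∀ d ∈ T₁', dyadIn d N₁) →
        (∀ d ∈ T₂', dyadIn d N₂) →
        μ (Stmt11Aux.Wev X (T₁' ∪ T₂') ∅)
          = μ (Stmt11Aux.Wev X T₁' ∅) * μ (Stmt11Aux.Wev X T₂' ∅) := by
      intro T₁' T₂' h1' h2'
      have e0 : ∀ S : Finset (Dyad V), Stmt11Aux.Wev (Ω := Ω) X S ∅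
          = {ω | ∀ d ∈ (↑S : Set (Dyad V)), X d ω = true} := by
        intro S; ext ω; simp [Stmt11Aux.Wev]
      rw [e0, e0, e0, Finset.coe_union]
      exact Stmt11Aux.mixed μ X hmeas H hN (↑T₁') (↑T₂')
        (fun d hd => h1' d hd) (fun d hd => h2' d hd)
    have hW := Stmt11Aux.W2 μ X hN hmeas hmix F₂ T₁ F₁ T₂ hT₁ hF₁ hT₂ hF₂ hdisj₁ hdisj₂
    have hA : {ω | ∀ d : Dyad V, dyadIn d N₁ → X d ω = f d} = Stmt11Aux.Wev X T₁ F₁ := by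
      ext ω
      simp only [Stmt11Aux.Wev, Set.mem_setOf_eq, Set.mem_inter_iff, hT₁def, hF₁def,
        Finset.mem_filter, Finset.mem_univ, true_and]
      constructor
      · intro h
        exact ⟨fun d hd => (h d hd.1).trans hd.2, fun d hd => (h d hd.1).trans hd.2⟩
      · rintro ⟨h1, h2⟩ d hd
        cases hf : f d
        · exact h2 d ⟨hd, hf⟩
        · exact h1 d ⟨hd, hf⟩
    have hB : {ω | ∀ d : Dyad V, dyadIn d N₂ → X d ω = g d} = Stmt11Aux.Wev X T₂ F₂ := by
      ext ω
      simp only [Stmt11Aux.Wev, Set.mem_setOf_eq, Set.mem_inter_iff, hT₂def, hF₂def,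
        Finset.mem_filter, Finset.mem_univ, true_and]
      constructor
      · intro h
        exact ⟨fun d hd => (h d hd.1).trans hd.2, fun d hd => (h d hd.1).trans hd.2⟩
      · rintro ⟨h1, h2⟩ d hd
        cases hg : g d
        · exact h2 d ⟨hd, hg⟩
        · exact h1 d ⟨hd, hg⟩
    have hAB : Stmt11Aux.Wev X T₁ F₁ ∩ Stmt11Aux.Wev X T₂ F₂
        = Stmt11Aux.Wev (Ω := Ω) X (T₁ ∪ T₂) (F₁ ∪ F₂) := by
      ext ω
      simp only [Stmt11Aux.Wev, Set.mem_inter_iff, Set.mem_setOf_eq,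
        Finset.forall_mem_union]
      tauto
    rw [hA, hB, hAB, hW]
end

section
/- Let η ∈ [0,1] and let φ : [0,1]³ → [0,1] be a Lebesgue-measurable function that is symmetric in its first two arguments, i.e., φ(u,v,λ) = φ(v,u,λ) for all u, v, λ. Suppose that (i) ∫∫∫ φ(u,v,λ) du dv dλ = η; (ii) ∫∫∫∫ φ(u,v,λ) φ(u′,v,λ) du du′ dv dλ = η²; and (iii) ∫∫∫∫∫ φ(u,v,λ) φ(u′,v,λ) φ(u,v′,λ) φ(u′,v′,λ) du du′ dv dv′ dλ = η⁴, where all integrals are with respect to Lebesgue measure on the unit interval in each variable. Then φ(u,v,λ) = η for Lebesgue-almost every (u,v,λ) ∈ [0,1]³. -/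
/-!
The degree `d(v, λ) = ∫ φ(u, v, λ) du` has mean `η` by (i) and second moment `η²` by (ii), so its
variance vanishes and `d = η` almost everywhere. By the symmetry of `φ`, the codegree
`Q(v, v', λ) = ∫ φ(u, v, λ) φ(u, v', λ) du` then has mean `η²`, and by (iii) second moment `η⁴`,
so `Q = η²` almost everywhere. Hence for almost every `λ` the kernel `ψ = φ(·, ·, λ) - η` satisfies
`∫ ψ(u, v) ψ(u, v') du = 0` for almost every `(v, v')`. Integrating against `g(v) g(v')` gives
`∫ (∫ g(v) ψ(u, v) dv)² du = 0` for every `g ∈ L²`, and since `L²` is separable this forces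
`ψ = 0` almost everywhere.
-/

open MeasureTheory ProbabilityTheory Set Function

section Prelims

variable {Ω : Type*} [MeasurableSpace Ω] {μ : Measure Ω}

theorem Measurable.comp₃ {α β γ δ : Type*} [MeasurableSpace α] [MeasurableSpace β]
    [MeasurableSpace γ] [MeasurableSpace δ] {φ : α → β → γ → δ}
    (hφ : Measurable fun p : α × β × γ => φ p.1 p.2.1 p.2.2) {f : Ω → α} {g : Ω → β} {h : Ω → γ}
    (hf : Measurable f) (hg : Measurable g) (hh : Measurable h) :
    Measurable fun x => φ (f x) (g x) (h x) :=
  hφ.comp (hf.prodMk (hg.prodMk hh))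

theorem norm_le_one_of_mem_unitInterval {x : ℝ} (hx : x ∈ unitInterval) : ‖x‖ ≤ 1 := by
  rw [Real.norm_of_nonneg hx.1]
  exact hx.2

theorem integral_mem_unitInterval [IsProbabilityMeasure μ] {f : Ω → ℝ}
    (hf : ∀ x, f x ∈ unitInterval) : ∫ x, f x ∂μ ∈ unitInterval := by
  refine ⟨integral_nonneg fun x => (hf x).1, ?_⟩
  have := norm_integral_le_of_norm_le_const (μ := μ)
    (.of_forall fun x => norm_le_one_of_mem_unitInterval (hf x))
  simp only [probReal_univ, mul_one, Real.norm_eq_abs] at this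
  exact (le_abs_self _).trans this

theorem MeasureTheory.MemLp.of_mem_unitInterval [IsFiniteMeasure μ] {f : Ω → ℝ} {p : ENNReal}
    (hf : AEStronglyMeasurable f μ) (h01 : ∀ x, f x ∈ unitInterval) : MemLp f p μ :=
  .of_bound hf 1 (.of_forall fun x => norm_le_one_of_mem_unitInterval (h01 x))

theorem MeasureTheory.Integrable.of_mem_unitInterval [IsFiniteMeasure μ] {f : Ω → ℝ}
    (hf : AEStronglyMeasurable f μ) (h01 : ∀ x, f x ∈ unitInterval) : Integrable f μ :=
  memLp_one_iff_integrable.1 (.of_mem_unitInterval hf h01)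

theorem ae_eq_of_integral_sq_eq_sq [IsProbabilityMeasure μ] {X : Ω → ℝ} {c : ℝ}
    (hX : MemLp X 2 μ) (h1 : ∫ ω, X ω ∂μ = c) (h2 : ∫ ω, X ω ^ 2 ∂μ = c ^ 2) :
    ∀ᵐ ω ∂μ, X ω = c := by
  have hvar : Var[X; μ] = 0 := by
    rw [variance_eq_sub hX]
    simp only [Pi.pow_apply, h1, h2, sub_self]
  simpa only [h1] using ae_eq_integral_of_variance_eq_zero hX hvar

end Prelims

section Kernel

variable {α β : Type*} [MeasurableSpace α] [MeasurableSpace β] {μ : Measure α} {ν : Measure β}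
  [IsFiniteMeasure μ] [IsFiniteMeasure ν] {ψ : α → β → ℝ} {C : ℝ}

theorem integral_sq_integral_mul_eq_zero (hψ : Measurable (uncurry ψ)) (hψC : ∀ u v, |ψ u v| ≤ C)
    (hK : ∀ᵐ p ∂ν.prod ν, ∫ u, ψ u p.1 * ψ u p.2 ∂μ = 0) {g : β → ℝ} (hg : Integrable g ν) :
    ∫ u, (∫ v, g v * ψ u v ∂ν) ^ 2 ∂μ = 0 := by
  have hsq : ∀ u, (∫ v, g v * ψ u v ∂ν) ^ 2
      = ∫ p, g p.1 * g p.2 * (ψ u p.1 * ψ u p.2) ∂ν.prod ν := by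
    intro u
    rw [sq, ← integral_prod_mul]
    congr with p
    ring
  have hF : Integrable (uncurry fun u (p : β × β) => g p.1 * g p.2 * (ψ u p.1 * ψ u p.2))
      (μ.prod (ν.prod ν)) := by
    refine Integrable.mono' (((hg.norm.mul_prod hg.norm).comp_snd μ).mul_const (C * C)) ?_
      (.of_forall fun x => ?_)
    · have hψm : AEStronglyMeasurable (fun x : α × β × β => ψ x.1 x.2.1 * ψ x.1 x.2.2)
          (μ.prod (ν.prod ν)) :=
        ((hψ.comp (measurable_fst.prodMk measurable_snd.fst)).mul
          (hψ.comp (measurable_fst.prodMk measurable_snd.snd))).aestronglyMeasurable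
      exact ((hg.1.comp_fst.mul hg.1.comp_snd).comp_snd).mul hψm
    · simp only [uncurry, norm_mul, Real.norm_eq_abs]
      exact mul_le_mul_of_nonneg_left (mul_le_mul (hψC _ _) (hψC _ _) (abs_nonneg _)
        ((abs_nonneg _).trans (hψC x.1 x.2.1))) (by positivity)
  simp_rw [hsq]
  rw [integral_integral_swap hF]
  refine integral_eq_zero_of_ae ?_
  filter_upwards [hK] with p hp
  rw [integral_const_mul, hp, mul_zero, Pi.zero_apply]

theorem ae_integral_mul_eq_zero (hψ : Measurable (uncurry ψ)) (hψC : ∀ u v, |ψ u v| ≤ C)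
    (hK : ∀ᵐ p ∂ν.prod ν, ∫ u, ψ u p.1 * ψ u p.2 ∂μ = 0) {g : β → ℝ} (hg : Integrable g ν) :
    ∀ᵐ u ∂μ, ∫ v, g v * ψ u v ∂ν = 0 := by
  set T : α → ℝ := fun u => ∫ v, g v * ψ u v ∂ν
  have hT : AEStronglyMeasurable T μ :=
    (hg.1.comp_snd.mul hψ.aestronglyMeasurable).integral_prod_right'
  have hTC : ∀ u, ‖T u‖ ≤ ∫ v, C * ‖g v‖ ∂ν := fun u =>
    norm_integral_le_of_norm_le (hg.norm.const_mul C) (.of_forall fun v => by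
      rw [norm_mul, mul_comm, Real.norm_eq_abs (ψ u v)]
      exact mul_le_mul_of_nonneg_right (hψC u v) (norm_nonneg _))
  have hT2 : Integrable (fun u => T u ^ 2) μ :=
    .of_bound (hT.pow 2) ((∫ v, C * ‖g v‖ ∂ν) ^ 2) (.of_forall fun u => by
      rw [norm_pow]
      exact pow_le_pow_left₀ (norm_nonneg _) (hTC u) 2)
  have := (integral_eq_zero_iff_of_nonneg (fun u => sq_nonneg (T u)) hT2).1
    (integral_sq_integral_mul_eq_zero hψ hψC hK hg)
  filter_upwards [this] with u hu
  exact pow_eq_zero_iff two_ne_zero |>.1 hu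

theorem ae_eq_zero_of_ae_integral_mul_eq_zero [MeasurableSpace.CountablyGenerated β]
    (hψ : Measurable (uncurry ψ)) (hψC : ∀ u v, |ψ u v| ≤ C)
    (hK : ∀ᵐ p ∂ν.prod ν, ∫ u, ψ u p.1 * ψ u p.2 ∂μ = 0) :
    ∀ᵐ p ∂μ.prod ν, ψ p.1 p.2 = 0 := by
  have : Fact ((2 : ENNReal) ≠ ⊤) := ⟨ENNReal.ofNat_ne_top⟩
  have hmem : ∀ u, MemLp (ψ u) 2 ν := fun u =>
    .of_bound (hψ.comp measurable_prodMk_left).aestronglyMeasurable C (.of_forall (hψC u))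
  -- `L²(ν)` is second countable, so it is enough to test `ψ u` against each of its elements.
  have hΨ : (fun u => (hmem u).toLp) =ᵐ[μ] 0 := ae_eq_zero_of_forall_inner (𝕜 := ℝ) fun c => by
    filter_upwards [ae_integral_mul_eq_zero hψ hψC hK ((Lp.memLp c).integrable one_le_two)]
      with u hu
    rw [Pi.zero_apply, L2.inner_def, ← hu]
    refine integral_congr_ae ?_
    filter_upwards [(hmem u).coeFn_toLp] with v hv
    simp [hv, mul_comm]
  refine (Measure.ae_prod_iff_ae_ae (p := fun p => ψ p.1 p.2 = 0)
    (measurableSet_eq_fun hψ measurable_const)).2 ?_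
  filter_upwards [hΨ] with u hu
  have h0 : ((hmem u).toLp : β → ℝ) =ᵐ[ν] 0 := by
    rw [show (hmem u).toLp = 0 from hu]
    exact Lp.coeFn_zero _ _ _
  filter_upwards [(hmem u).coeFn_toLp, h0] with v h1 h2
  rwa [h1] at h2

end Kernel

section Graphon

variable {α : Type*} [MeasurableSpace α] {μ : Measure α} [IsProbabilityMeasure μ]
  {W : α → α → ℝ} {η : ℝ}

theorem integral_integral_codegree_eq_sq (hW : Measurable (uncurry W))
    (hW01 : ∀ u v, W u v ∈ unitInterval) (hsymm : ∀ u v, W u v = W v u)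
    (hdeg : ∀ᵐ v ∂μ, ∫ u, W u v ∂μ = η) :
    ∫ v, ∫ v', ∫ u, W u v * W u v' ∂μ ∂μ ∂μ = η ^ 2 := by
  have hrow : ∀ v, ∫ v', ∫ u, W u v * W u v' ∂μ ∂μ = ∫ u, W u v * ∫ v', W v' u ∂μ ∂μ := by
    intro v
    have hint : Integrable (uncurry fun v' u => W u v * W u v') (μ.prod μ) :=
      .of_mem_unitInterval ((hW.comp (measurable_snd.prodMk measurable_const)).mul
        (hW.comp measurable_swap)).aestronglyMeasurable
        fun x => unitInterval.mul_mem (hW01 _ _) (hW01 _ _)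
    rw [integral_integral_swap hint]
    refine integral_congr_ae (.of_forall fun u => ?_)
    simp only [integral_const_mul, hsymm u]
  calc ∫ v, ∫ v', ∫ u, W u v * W u v' ∂μ ∂μ ∂μ = ∫ v, ∫ u, W u v * η ∂μ ∂μ := by
        congr 1 with v
        rw [hrow]
        refine integral_congr_ae ?_
        filter_upwards [hdeg] with u hu
        rw [hu]
    _ = ∫ v, η * η ∂μ := by
        refine integral_congr_ae ?_
        filter_upwards [hdeg] with v hv
        rw [integral_mul_const, hv]
    _ = η ^ 2 := by simp [sq]

theorem ae_eq_of_ae_codegree_eq_sq [MeasurableSpace.CountablyGenerated α]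
    (hW : Measurable (uncurry W)) (hW01 : ∀ u v, W u v ∈ unitInterval)
    (hdeg : ∀ᵐ v ∂μ, ∫ u, W u v ∂μ = η)
    (hcodeg : ∀ᵐ p ∂μ.prod μ, ∫ u, W u p.1 * W u p.2 ∂μ = η ^ 2) :
    ∀ᵐ p ∂μ.prod μ, W p.1 p.2 = η := by
  have hint : ∀ v, Integrable (fun u => W u v) μ := fun v =>
    .of_mem_unitInterval (hW.comp measurable_prodMk_right).aestronglyMeasurable (hW01 · v)
  have hint₂ : ∀ v v', Integrable (fun u => W u v * W u v') μ := fun v v' =>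
    .of_mem_unitInterval ((hint v).1.mul (hint v').1)
      fun u => unitInterval.mul_mem (hW01 u v) (hW01 u v')
  have hψC : ∀ u v, |W u v - η| ≤ 1 + |η| := fun u v =>
    (abs_sub _ _).trans (add_le_add_left (norm_le_one_of_mem_unitInterval (hW01 u v)) _)
  have hK : ∀ᵐ p ∂μ.prod μ, ∫ u, (W u p.1 - η) * (W u p.2 - η) ∂μ = 0 := by
    filter_upwards [measurePreserving_fst.quasiMeasurePreserving.ae hdeg,
      measurePreserving_snd.quasiMeasurePreserving.ae hdeg, hcodeg] with p h₁ h₂ h₁₂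
    have hexp : ∀ u, (W u p.1 - η) * (W u p.2 - η)
        = W u p.1 * W u p.2 - (η * W u p.1 + η * W u p.2) + η ^ 2 := fun u => by ring
    simp_rw [hexp]
    have i₁ : Integrable (fun u => η * W u p.1 + η * W u p.2) μ :=
      ((hint _).const_mul η).add ((hint _).const_mul η)
    have i₂ : Integrable (fun u => W u p.1 * W u p.2 - (η * W u p.1 + η * W u p.2)) μ :=
      (hint₂ _ _).sub i₁
    rw [integral_add i₂ (integrable_const _), integral_sub (hint₂ _ _) i₁,
      integral_add ((hint _).const_mul η) ((hint _).const_mul η),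
      integral_const_mul, integral_const_mul, h₁, h₂, h₁₂, integral_const]
    simp only [probReal_univ, one_smul]
    ring
  filter_upwards [ae_eq_zero_of_ae_integral_mul_eq_zero (ψ := fun u v => W u v - η)
    (hW.sub measurable_const) hψC hK] with p hp
  exact sub_eq_zero.1 hp

end Graphon

section Mixture

variable {α Λ : Type*} [MeasurableSpace α] [MeasurableSpace Λ] {μ : Measure α} {ν : Measure Λ}
  [IsProbabilityMeasure μ] [IsProbabilityMeasure ν] {φ : α → α → Λ → ℝ} {η : ℝ}

theorem ae_ae_degree_eq_of_twoStar (hφ : Measurable fun p : α × α × Λ => φ p.1 p.2.1 p.2.2)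
    (hφ01 : ∀ u v l, φ u v l ∈ unitInterval)
    (h1 : ∫ l, ∫ v, ∫ u, φ u v l ∂μ ∂μ ∂ν = η)
    (h2 : ∫ l, ∫ v, ∫ u, ∫ u', φ u v l * φ u' v l ∂μ ∂μ ∂μ ∂ν = η ^ 2) :
    ∀ᵐ l ∂ν, ∀ᵐ v ∂μ, ∫ u, φ u v l ∂μ = η := by
  set D : Λ × α → ℝ := fun x => ∫ u, φ u x.2 x.1 ∂μ
  have hD : AEStronglyMeasurable D (ν.prod μ) :=
    (hφ.comp₃ measurable_snd measurable_fst.snd measurable_fst.fst).stronglyMeasurable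
      |>.integral_prod_right' |>.aestronglyMeasurable
  have hD01 : ∀ x, D x ∈ unitInterval := fun x => integral_mem_unitInterval fun u => hφ01 _ _ _
  refine Measure.ae_ae_of_ae_prod (p := fun x => D x = η)
    (ae_eq_of_integral_sq_eq_sq (.of_mem_unitInterval hD hD01) ?_ ?_)
  · rw [integral_prod _ (.of_mem_unitInterval hD hD01)]
    exact h1
  · rw [integral_prod (fun x => D x ^ 2) (.of_mem_unitInterval (hD.pow 2) fun x => by
      rw [sq]; exact unitInterval.mul_mem (hD01 x) (hD01 x))]
    simpa only [integral_const_mul, integral_mul_const, sq] using h2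

theorem ae_ae_codegree_eq_of_fourCycle (hφ : Measurable fun p : α × α × Λ => φ p.1 p.2.1 p.2.2)
    (hφ01 : ∀ u v l, φ u v l ∈ unitInterval) (hsymm : ∀ u v l, φ u v l = φ v u l)
    (hdeg : ∀ᵐ l ∂ν, ∀ᵐ v ∂μ, ∫ u, φ u v l ∂μ = η)
    (h3 : ∫ l, ∫ v, ∫ v', ∫ u, ∫ u', φ u v l * φ u' v l * φ u v' l * φ u' v' l
      ∂μ ∂μ ∂μ ∂μ ∂ν = η ^ 4) :
    ∀ᵐ l ∂ν, ∀ᵐ p ∂μ.prod μ, ∫ u, φ u p.1 l * φ u p.2 l ∂μ = η ^ 2 := by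
  set Q : Λ × α × α → ℝ := fun x => ∫ u, φ u x.2.1 x.1 * φ u x.2.2 x.1 ∂μ
  have hQm : Measurable Q :=
    ((hφ.comp₃ measurable_snd measurable_fst.snd.fst measurable_fst.fst).mul
      (hφ.comp₃ measurable_snd measurable_fst.snd.snd measurable_fst.fst)).stronglyMeasurable
      |>.integral_prod_right' |>.measurable
  have hQ01 : ∀ x, Q x ∈ unitInterval := fun x =>
    integral_mem_unitInterval fun u => unitInterval.mul_mem (hφ01 _ _ _) (hφ01 _ _ _)
  have hQ2_01 : ∀ x, Q x ^ 2 ∈ unitInterval := fun x => by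
    rw [sq]; exact unitInterval.mul_mem (hQ01 x) (hQ01 x)
  have hQl : ∀ l, Measurable fun p : α × α => Q (l, p) := fun l =>
    hQm.comp measurable_prodMk_left
  refine Measure.ae_ae_of_ae_prod (p := fun x => Q x = η ^ 2)
    (ae_eq_of_integral_sq_eq_sq (.of_mem_unitInterval hQm.aestronglyMeasurable hQ01) ?_ ?_)
  · rw [integral_prod _ (.of_mem_unitInterval hQm.aestronglyMeasurable hQ01)]
    calc ∫ l, ∫ p, Q (l, p) ∂μ.prod μ ∂ν = ∫ l, η ^ 2 ∂ν := by
          refine integral_congr_ae ?_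
          filter_upwards [hdeg] with l hl
          rw [integral_prod _ (.of_mem_unitInterval (hQl l).aestronglyMeasurable fun p => hQ01 _)]
          exact integral_integral_codegree_eq_sq
            (hφ.comp₃ measurable_fst measurable_snd measurable_const) (hφ01 · · l)
            (hsymm · · l) hl
      _ = η ^ 2 := by simp
  · have hcycle : ∀ l v v', ∫ u, ∫ u', φ u v l * φ u' v l * φ u v' l * φ u' v' l ∂μ ∂μ
        = Q (l, v, v') ^ 2 := fun l v v' => by
      simp only [Q, sq, ← integral_mul_const, ← integral_const_mul]
      congr 1 with u
      congr 1 with u'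
      ring
    have hQ2l : ∀ l, ∫ p, Q (l, p) ^ 2 ∂μ.prod μ = ∫ v, ∫ v', Q (l, v, v') ^ 2 ∂μ ∂μ := fun l =>
      integral_prod _ (.of_mem_unitInterval ((hQl l).pow_const 2).aestronglyMeasurable
        fun p => hQ2_01 _)
    rw [integral_prod (fun x => Q x ^ 2)
      (.of_mem_unitInterval (hQm.pow_const 2).aestronglyMeasurable hQ2_01)]
    simp only [hcycle] at h3
    simp only [hQ2l, h3]
    ring

theorem ae_eq_of_twoStar_fourCycle [MeasurableSpace.CountablyGenerated α]
    (hφ : Measurable fun p : α × α × Λ => φ p.1 p.2.1 p.2.2)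
    (hφ01 : ∀ u v l, φ u v l ∈ unitInterval) (hsymm : ∀ u v l, φ u v l = φ v u l)
    (h1 : ∫ l, ∫ v, ∫ u, φ u v l ∂μ ∂μ ∂ν = η)
    (h2 : ∫ l, ∫ v, ∫ u, ∫ u', φ u v l * φ u' v l ∂μ ∂μ ∂μ ∂ν = η ^ 2)
    (h3 : ∫ l, ∫ v, ∫ v', ∫ u, ∫ u', φ u v l * φ u' v l * φ u v' l * φ u' v' l
      ∂μ ∂μ ∂μ ∂μ ∂ν = η ^ 4) :
    ∀ᵐ p ∂μ.prod (μ.prod ν), φ p.1 p.2.1 p.2.2 = η := by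
  have hdeg := ae_ae_degree_eq_of_twoStar hφ hφ01 h1 h2
  have hcodeg := ae_ae_codegree_eq_of_fourCycle hφ hφ01 hsymm hdeg h3
  have hslices : ∀ᵐ l ∂ν, ∀ᵐ p ∂μ.prod μ, φ p.1 p.2 l = η := by
    filter_upwards [hdeg, hcodeg] with l hl hl'
    exact ae_eq_of_ae_codegree_eq_sq (hφ.comp₃ measurable_fst measurable_snd measurable_const)
      (hφ01 · · l) hl hl'
  have hprod : ∀ᵐ x ∂ν.prod (μ.prod μ), φ x.2.1 x.2.2 x.1 = η :=
    (Measure.ae_prod_iff_ae_ae (p := fun x : Λ × α × α => φ x.2.1 x.2.2 x.1 = η)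
      (measurableSet_eq_fun (hφ.comp₃ measurable_snd.fst measurable_snd.snd measurable_fst)
        measurable_const)).2 hslices
  exact (Measure.measurePreserving_swap.comp (measurePreserving_prodAssoc μ μ ν).symm)
    |>.quasiMeasurePreserving.ae hprod

end Mixture

theorem stmt17_general (η : ℝ)
    (φ : ℝ → ℝ → ℝ → ℝ)
    (hmeas : Measurable fun p : ℝ × ℝ × ℝ => φ p.1 p.2.1 p.2.2)
    (hrange : ∀ u v l : ℝ, φ u v l ∈ Set.Icc (0 : ℝ) 1)
    (hsymm : ∀ u v l : ℝ, φ u v l = φ v u l)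
    (h1 : (∫ l in Set.Icc (0:ℝ) 1, ∫ v in Set.Icc (0:ℝ) 1, ∫ u in Set.Icc (0:ℝ) 1,
            φ u v l) = η)
    (h2 : (∫ l in Set.Icc (0:ℝ) 1, ∫ v in Set.Icc (0:ℝ) 1, ∫ u in Set.Icc (0:ℝ) 1,
            ∫ u' in Set.Icc (0:ℝ) 1, φ u v l * φ u' v l) = η ^ 2)
    (h3 : (∫ l in Set.Icc (0:ℝ) 1, ∫ v in Set.Icc (0:ℝ) 1, ∫ v' in Set.Icc (0:ℝ) 1,
            ∫ u in Set.Icc (0:ℝ) 1, ∫ u' in Set.Icc (0:ℝ) 1,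
            φ u v l * φ u' v l * φ u v' l * φ u' v' l) = η ^ 4) :
    ∀ᵐ p ∂((volume : Measure (ℝ × ℝ × ℝ)).restrict
        (Set.Icc (0:ℝ) 1 ×ˢ Set.Icc (0:ℝ) 1 ×ˢ Set.Icc (0:ℝ) 1)),
      φ p.1 p.2.1 p.2.2 = η := by
  have : IsProbabilityMeasure (volume.restrict (Icc (0 : ℝ) 1)) := ⟨by simp⟩
  rw [Measure.volume_eq_prod, ← Measure.prod_restrict, Measure.volume_eq_prod,
    ← Measure.prod_restrict]
  exact ae_eq_of_twoStar_fourCycle hmeas hrange hsymm h1 h2 h3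

/-- Let `η ∈ [0,1]` and let `φ : [0,1]³ → [0,1]` be measurable and
symmetric in its first two arguments.  If the integral of `φ` is `η`, the "2-star"
integral `∫ φ(u,v,λ)φ(u′,v,λ)` is `η²`, and the "4-cycle" integral
`∫ φ(u,v,λ)φ(u′,v,λ)φ(u,v′,λ)φ(u′,v′,λ)` is `η⁴`, then `φ = η` almost everywhere
on `[0,1]³`. -/
theorem stmt17 (η : ℝ) (hη : η ∈ Set.Icc (0 : ℝ) 1)
    (φ : ℝ → ℝ → ℝ → ℝ)
    (hmeas : Measurable fun p : ℝ × ℝ × ℝ => φ p.1 p.2.1 p.2.2)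
    (hrange : ∀ u v l : ℝ, φ u v l ∈ Set.Icc (0 : ℝ) 1)
    (hsymm : ∀ u v l : ℝ, φ u v l = φ v u l)
    (h1 : (∫ l in Set.Icc (0:ℝ) 1, ∫ v in Set.Icc (0:ℝ) 1, ∫ u in Set.Icc (0:ℝ) 1,
            φ u v l) = η)
    (h2 : (∫ l in Set.Icc (0:ℝ) 1, ∫ v in Set.Icc (0:ℝ) 1, ∫ u in Set.Icc (0:ℝ) 1,
            ∫ u' in Set.Icc (0:ℝ) 1, φ u v l * φ u' v l) = η ^ 2)
    (h3 : (∫ l in Set.Icc (0:ℝ) 1, ∫ v in Set.Icc (0:ℝ) 1, ∫ v' in Set.Icc (0:ℝ) 1,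
            ∫ u in Set.Icc (0:ℝ) 1, ∫ u' in Set.Icc (0:ℝ) 1,
            φ u v l * φ u' v l * φ u v' l * φ u' v' l) = η ^ 4) :
    ∀ᵐ p ∂((volume : Measure (ℝ × ℝ × ℝ)).restrict
        (Set.Icc (0:ℝ) 1 ×ˢ Set.Icc (0:ℝ) 1 ×ˢ Set.Icc (0:ℝ) 1)),
      φ p.1 p.2.1 p.2.2 = η :=
  stmt17_general η φ hmeas hrange hsymm h1 h2 h3
end
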